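/- Let c : ℕ → ℕ satisfy c(i) ≥ 4 for all i ≥ 1, and define polynomials 𝓢_n ∈ ℤ[q] by 𝓢_0 = 0, 𝓢_1 = 1, and 𝓢_{n+1} = (1 + q + ⋯ + q^{c(n+1)−1})·𝓢_n − q^{c(n)−1}·𝓢_{n−1} for n ≥ 1. Then for every n ≥ 1 and every complex number q with |q| ≤ R_*, one has 𝓢_n(q) ≠ 0. -/
import Mathlib


open Polynomial

/-- `R_* = (3 − √5)/2`. -/
noncomputable def Rstar : ℝ := (3 - Real.sqrt 5) / 2

lemma sqrt5_sq : Real.sqrt 5 * Real.sqrt 5 = 5 := Real.mul_self_sqrt (by norm_num)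

lemma sqrt5_gt : (2.236 : ℝ) < Real.sqrt 5 := by
  nlinarith [sqrt5_sq, Real.sqrt_nonneg 5]

lemma sqrt5_lt : Real.sqrt 5 < 2.2361 := by
  nlinarith [sqrt5_sq, Real.sqrt_nonneg 5]

lemma Rstar_pos : 0 < Rstar := by unfold Rstar; nlinarith [sqrt5_lt]

lemma Rstar_lt : Rstar < 0.382 := by unfold Rstar; nlinarith [sqrt5_gt]

lemma Rstar_cube_lt : Rstar ^ 3 < 0.0558 := by
  nlinarith [Rstar_pos, Rstar_lt, sq_nonneg Rstar]

/-- Key lower bound for the q-integer on the disc. -/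
lemma qint_lower (c : ℕ) (hc : 4 ≤ c) (q : ℂ) (hq : ‖q‖ ≤ Rstar) :
    (1/2 : ℝ) + 2 * Rstar ^ 3 ≤ ‖(aeval q) (∑ i ∈ Finset.range c, (X : Polynomial ℤ) ^ i)‖ := by
  have hr0 : (0:ℝ) ≤ ‖q‖ := norm_nonneg q
  have hr : ‖q‖ ≤ 0.382 := le_trans hq (le_of_lt Rstar_lt)
  have hr1 : ‖q‖ ≤ 1 := by linarith
  have hq1 : q ≠ 1 := by
    intro h; rw [h] at hr; norm_num at hr
  have heval : (aeval q) (∑ i ∈ Finset.range c, (X : Polynomial ℤ) ^ i)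
      = (q ^ c - 1) / (q - 1) := by
    rw [map_sum]
    simp only [map_pow, aeval_X]
    exact geom_sum_eq hq1 c
  rw [heval, norm_div]
  -- denominator bounds
  have hden_pos : (0:ℝ) < ‖q - 1‖ := by
    have h1 : ‖(1:ℂ)‖ - ‖q‖ ≤ ‖1 - q‖ := norm_sub_norm_le 1 q
    rw [norm_one] at h1
    rw [norm_sub_rev]
    linarith
  have hden_le : ‖q - 1‖ ≤ 1.382 := by
    have := norm_sub_le q 1
    rw [norm_one] at this
    linarith
  -- numerator bound
  have hpc : ‖q‖ ^ c ≤ 0.382 ^ 4 := by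
    calc ‖q‖ ^ c ≤ ‖q‖ ^ 4 := pow_le_pow_of_le_one hr0 hr1 hc
    _ ≤ 0.382 ^ 4 := pow_le_pow_left₀ hr0 hr 4
  have hnum : (1:ℝ) - 0.382 ^ 4 ≤ ‖q ^ c - 1‖ := by
    have h1 : ‖(1:ℂ)‖ - ‖q ^ c‖ ≤ ‖1 - q ^ c‖ := norm_sub_norm_le 1 (q ^ c)
    rw [norm_one, norm_pow] at h1
    rw [norm_sub_rev]
    linarith
  rw [le_div_iff₀ hden_pos]
  nlinarith [Rstar_cube_lt, Rstar_pos, pow_pos Rstar_pos 3]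

theorem denominators_nonzero_on_disc
    (c : ℕ → ℕ) (hc : ∀ i : ℕ, 1 ≤ i → 4 ≤ c i)
    (S : ℕ → Polynomial ℤ) (hS0 : S 0 = 0) (hS1 : S 1 = 1)
    (hSrec : ∀ n : ℕ, 1 ≤ n →
      S (n + 1) = (∑ i ∈ Finset.range (c (n + 1)), X ^ i) * S n -
        X ^ (c n - 1) * S (n - 1)) :
    ∀ n : ℕ, 1 ≤ n → ∀ q : ℂ, ‖q‖ ≤ Rstar → aeval q (S n) ≠ 0 := by
  intro n hn q hq
  have hr0 : (0:ℝ) ≤ ‖q‖ := norm_nonneg q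
  have hr : ‖q‖ ≤ 0.382 := le_trans hq (le_of_lt Rstar_lt)
  have hr1 : ‖q‖ ≤ 1 := by linarith
  have hqR : ‖q‖ ^ 3 ≤ Rstar ^ 3 := pow_le_pow_left₀ hr0 hq 3
  have H : ∀ m : ℕ, 1 ≤ m → 0 < ‖(aeval q) (S m)‖ ∧
      (1/2 : ℝ) * ‖(aeval q) (S m)‖ ≤ ‖(aeval q) (S (m+1))‖ := by
    intro m hm
    induction m with
    | zero => omega
    | succ k ih =>
      rcases Nat.lt_or_ge 1 (k+1) with h1 | h1
      · -- k ≥ 1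
        have hk : 1 ≤ k := by omega
        obtain ⟨hpos, hstep⟩ := ih hk
        have hApos : 0 < ‖(aeval q) (S (k+1))‖ := lt_of_lt_of_le (by linarith) hstep
        constructor
        · exact hApos
        · have hrec := hSrec (k+1) (by omega)
          simp only [Nat.add_sub_cancel] at hrec
          rw [hrec, map_sub, map_mul, map_mul, map_pow, aeval_X]
          have hG := qint_lower (c (k+1+1)) (hc (k+1+1) (by omega)) q hq
          have he : ‖q‖ ^ (c (k+1) - 1) ≤ Rstar ^ 3 := by
            calc ‖q‖ ^ (c (k+1) - 1) ≤ ‖q‖ ^ 3 := by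
                  apply pow_le_pow_of_le_one hr0 hr1
                  have := hc (k+1) (by omega); omega
            _ ≤ Rstar ^ 3 := hqR
          have hnorm : ‖(aeval q) (∑ i ∈ Finset.range (c (k+1+1)), (X:Polynomial ℤ) ^ i) * (aeval q) (S (k+1))‖
              - ‖q ^ (c (k+1) - 1) * (aeval q) (S k)‖
              ≤ ‖(aeval q) (∑ i ∈ Finset.range (c (k+1+1)), (X:Polynomial ℤ) ^ i) * (aeval q) (S (k+1))
                - q ^ (c (k+1) - 1) * (aeval q) (S k)‖ := norm_sub_norm_le _ _
          rw [norm_mul, norm_mul, norm_pow] at hnorm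
          have hB2 : ‖(aeval q) (S k)‖ ≤ 2 * ‖(aeval q) (S (k+1))‖ := by linarith
          have hq3 : (0:ℝ) ≤ ‖q‖ ^ (c (k+1) - 1) := by positivity
          nlinarith [mul_le_mul he hB2 (norm_nonneg _) (pow_nonneg Rstar_pos.le 3),
            mul_le_mul_of_nonneg_right hG (le_of_lt hApos)]
      · -- k = 0, m = 1
        have hk0 : k = 0 := by omega
        subst hk0
        constructor
        · rw [hS1]; simp
        · have hrec := hSrec 1 (le_refl 1)
          simp only [Nat.sub_self] at hrec
          rw [hrec, hS0, hS1, mul_one, mul_zero, sub_zero]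
          have hG := qint_lower (c 2) (hc 2 (by omega)) q hq
          have h3 : (0:ℝ) ≤ Rstar ^ 3 := pow_nonneg Rstar_pos.le 3
          have : ‖(aeval q) ((1:Polynomial ℤ))‖ = 1 := by simp
          rw [this]
          linarith
  exact norm_pos_iff.mp (H n hn).1
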